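/- Let v¹,…,vⁿ be an orthonormal basis of ℝⁿ, let α₁,…,αₙ > 0, λ ∈ [0,1], and define E_λ = {x ∈ ℝⁿ : ∑ᵢ ⟨x,vⁱ⟩²/αᵢ^(2λ) ≤ 1}. Then for any c₀, c₁ ∈ ℝⁿ, E_λ + (1-λ)c₀ + λc₁ ⊆ (1-λ)(E_0 + c₀) + λ(E_1 + c₁), where the right-hand side is a Minkowski combination. -/

import Mathlib

open scoped RealInnerProductSpace Pointwise

/-- The geometric mean ellipsoid `E_l` with principal axes `v i` and half-lengths `(α i)^l`. -/
def meanEllipsoid {n : ℕ} (v : Fin n → EuclideanSpace ℝ (Fin n)) (α : Fin n → ℝ) (l : ℝ) :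
    Set (EuclideanSpace ℝ (Fin n)) :=
  {x | ∑ i, ⟪x, v i⟫ ^ 2 / (α i) ^ (2 * l) ≤ 1}

/-!
Write `β i = ⟪x, v i⟫` for the coordinates of a point `x ∈ E_λ` and put `m i = (1 - λ) + λ α i`.
The points `y₀`, `y₁` with coordinates `β i / m i` and `α i β i / m i` (and the same component
as `x` orthogonal to the `v i`) satisfy `(1 - λ) y₀ + λ y₁ = x`, and both lie in their ellipsoids
because `∑ (β i / m i)² ≤ ∑ β i² / α i^(2λ) ≤ 1`: this is weighted AM-GM, `α i ^ λ ≤ m i`.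
-/

section ScaleAlong

variable {ι E : Type*} [Fintype ι] [NormedAddCommGroup E] [InnerProductSpace ℝ E]

def scaleAlong (v : ι → E) (f : ι → ℝ) (x : E) : E :=
  x + ∑ i, ((f i - 1) * ⟪x, v i⟫) • v i

theorem inner_scaleAlong {v : ι → E} (hv : Orthonormal ℝ v) (f : ι → ℝ) (x : E) (j : ι) :
    ⟪scaleAlong v f x, v j⟫ = f j * ⟪x, v j⟫ := by
  rw [scaleAlong, inner_add_left, hv.inner_left_fintype, conj_trivial]
  ring

theorem smul_scaleAlong_add_smul_scaleAlong (v : ι → E) {f g : ι → ℝ} {l : ℝ}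
    (hfg : ∀ i, (1 - l) * f i + l * g i = 1) (x : E) :
    (1 - l) • scaleAlong v f x + l • scaleAlong v g x = x := by
  have hcoef : ∀ i, (1 - l) * ((f i - 1) * ⟪x, v i⟫) + l * ((g i - 1) * ⟪x, v i⟫) = 0 := by
    intro i
    linear_combination ⟪x, v i⟫ * hfg i
  simp only [scaleAlong, smul_add, Finset.smul_sum, smul_smul]
  rw [add_add_add_comm, ← add_smul, sub_add_cancel, one_smul, ← Finset.sum_add_distrib]
  simp only [← add_smul, hcoef, zero_smul, Finset.sum_const_zero, add_zero]

end ScaleAlong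

theorem rpow_le_one_sub_add_mul {a l : ℝ} (ha : 0 ≤ a) (hl : l ∈ Set.Icc (0 : ℝ) 1) :
    a ^ l ≤ 1 - l + l * a := by
  simpa using Real.geom_mean_le_arith_mean2_weighted (sub_nonneg.2 hl.2) hl.1 zero_le_one ha
    (sub_add_cancel 1 l)

theorem Set.add_singleton_subset_smul_add_smul {R M : Type*} [Monoid R] [AddCommMonoid M]
    [DistribMulAction R M] {A B C : Set M} {a b : R} (h : A ⊆ a • B + b • C) (c₀ c₁ : M) :
    A + {a • c₀ + b • c₁} ⊆ a • (B + {c₀}) + b • (C + {c₁}) := by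
  rw [smul_add, smul_add, Set.smul_set_singleton, Set.smul_set_singleton, add_add_add_comm,
    Set.singleton_add_singleton]
  exact Set.add_subset_add_right h

theorem meanEllipsoid_subset_smul_add_smul {n : ℕ} {v : Fin n → EuclideanSpace ℝ (Fin n)}
    (hv : Orthonormal ℝ v) {α : Fin n → ℝ} (hα : ∀ i, 0 < α i) {l : ℝ}
    (hl : l ∈ Set.Icc (0 : ℝ) 1) :
    meanEllipsoid v α l ⊆ (1 - l) • meanEllipsoid v α 0 + l • meanEllipsoid v α 1 := by
  intro x hx
  set m : Fin n → ℝ := fun i => 1 - l + l * α i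
  have hm : ∀ i, α i ^ l ≤ m i := fun i => rpow_le_one_sub_add_mul (hα i).le hl
  have hm_pos : ∀ i, 0 < m i := fun i => (Real.rpow_pos_of_pos (hα i) l).trans_le (hm i)
  have hsum : ∑ i, (⟪x, v i⟫ / m i) ^ 2 ≤ 1 := by
    refine le_trans (Finset.sum_le_sum fun i _ => ?_) hx
    rw [div_pow, mul_comm 2 l, Real.rpow_mul (hα i).le, Real.rpow_two]
    have := Real.rpow_pos_of_pos (hα i) l
    gcongr
    exact hm i
  refine ⟨(1 - l) • scaleAlong v (fun i => 1 / m i) x, Set.smul_mem_smul_set ?_,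
    l • scaleAlong v (fun i => α i / m i) x, Set.smul_mem_smul_set ?_,
    smul_scaleAlong_add_smul_scaleAlong v (fun i => ?_) x⟩
  · simp only [meanEllipsoid, Set.mem_ofPred_eq, inner_scaleAlong hv, mul_zero, Real.rpow_zero,
      div_one]
    convert hsum using 3
    ring
  · simp only [meanEllipsoid, Set.mem_ofPred_eq, inner_scaleAlong hv, mul_one, Real.rpow_two]
    convert hsum using 2 with i
    field_simp [(hα i).ne']
  · field_simp [(hm_pos i).ne']
    rfl

theorem stmt_8 {n : ℕ} (v : Fin n → EuclideanSpace ℝ (Fin n))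
    (hv : Orthonormal ℝ v)
    (α : Fin n → ℝ) (hα : ∀ i, 0 < α i) (l : ℝ) (hl : l ∈ Set.Icc (0:ℝ) 1)
    (c₀ c₁ : EuclideanSpace ℝ (Fin n)) :
    meanEllipsoid v α l + ({(1 - l) • c₀ + l • c₁} : Set (EuclideanSpace ℝ (Fin n))) ⊆
      (1 - l) • (meanEllipsoid v α 0 + ({c₀} : Set (EuclideanSpace ℝ (Fin n)))) + l • (meanEllipsoid v α 1 + ({c₁} : Set (EuclideanSpace ℝ (Fin n)))) :=
  Set.add_singleton_subset_smul_add_smul (meanEllipsoid_subset_smul_add_smul hv hα hl) c₀ c₁
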